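/- An R-module M is a comultiplication module if and only if M is an (R \ 𝔪)-comultiplication module for every maximal ideal 𝔪 of R. -/

import Mathlib

/-!
Every submodule satisfies `N ≤ (0 :_M ann N)`, and `N ≤ (0 :_M I)` forces `I ≤ ann N`, so
`(0 :_M ann N) ≤ (0 :_M I)`. Hence if `M` is `(R \ 𝔪)`-comultiplication, each
`m ∈ (0 :_M ann N)` has some `s ∉ 𝔪` with `s • m ∈ N`: the ideal `(N : m)` lies in no maximal
ideal, so it is `R` and `m ∈ N`.
-/

open Pointwise

/-- A multiplicatively closed set: `0 ∉ S`, `1 ∈ S`, closed under multiplication. -/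
def IsMCS {R : Type*} [CommRing R] (S : Set R) : Prop :=
  (0 : R) ∉ S ∧ (1 : R) ∈ S ∧ ∀ s ∈ S, ∀ t ∈ S, s * t ∈ S

/-- The submodule `(0 :_M I) = {m ∈ M : I • m = 0}`. -/
def resid (R M : Type*) [CommRing R] [AddCommGroup M] [Module R M] (I : Ideal R) :
    Submodule R M where
  carrier := {m | ∀ a ∈ I, a • m = 0}
  add_mem' := by
    intro x y hx hy a ha
    rw [smul_add, hx a ha, hy a ha, add_zero]
  zero_mem' := by
    intro a _
    rw [smul_zero]
  smul_mem' := by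
    intro r x hx a ha
    rw [smul_comm, hx a ha, smul_zero]

/-- `M` is an `S`-comultiplication module: for each submodule `N` there exist `s ∈ S` and an
ideal `I` with `s • (0 :_M I) ⊆ N ⊆ (0 :_M I)`. -/
def IsSComult (R M : Type*) [CommRing R] [AddCommGroup M] [Module R M] (S : Set R) : Prop :=
  ∀ N : Submodule R M, ∃ s ∈ S, ∃ I : Ideal R,
    (∀ m ∈ resid R M I, s • m ∈ N) ∧ N ≤ resid R M I

/-- `M` is a comultiplication module: every submodule `N` equals `(0 :_M ann N)`. -/
def IsComult (R M : Type*) [CommRing R] [AddCommGroup M] [Module R M] : Prop :=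
  ∀ N : Submodule R M, N = resid R M N.annihilator

section

open Submodule

variable {R M : Type*} [CommRing R] [AddCommGroup M] [Module R M]

theorem le_resid_iff {N : Submodule R M} {I : Ideal R} :
    N ≤ resid R M I ↔ I ≤ N.annihilator :=
  ⟨fun h _ ha => mem_annihilator.mpr fun _ hn => h hn _ ha,
    fun h _ hn _ ha => mem_annihilator.mp (h ha) _ hn⟩

theorem le_resid_annihilator (N : Submodule R M) : N ≤ resid R M N.annihilator :=
  le_resid_iff.mpr le_rfl

theorem resid_antitone : Antitone (resid R M) :=
  fun _ _ hIJ _ hm _ ha => hm _ (hIJ ha)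

theorem IsComult.isSComult (h : IsComult R M) {S : Set R} (hS : 1 ∈ S) : IsSComult R M S :=
  fun N => ⟨1, hS, N.annihilator, fun m hm => by rwa [one_smul, h N], (h N).le⟩

theorem IsSComult.exists_smul_mem {S : Set R} (h : IsSComult R M S) (N : Submodule R M)
    {m : M} (hm : m ∈ resid R M N.annihilator) : ∃ s ∈ S, s • m ∈ N := by
  obtain ⟨s, hs, I, hsI, hNI⟩ := h N
  exact ⟨s, hs, hsI m (resid_antitone (le_resid_iff.mp hNI) hm)⟩

theorem Submodule.mem_of_forall_isMaximal_exists_smul_mem {N : Submodule R M} {m : M}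
    (h : ∀ 𝔪 : Ideal R, 𝔪.IsMaximal → ∃ s ∉ 𝔪, s • m ∈ N) : m ∈ N := by
  have hcolon : N.colon (span R {m}) = ⊤ := by
    by_contra hne
    obtain ⟨𝔪, h𝔪, hle⟩ := Ideal.exists_le_maximal _ hne
    obtain ⟨s, hs, hsm⟩ := h 𝔪 h𝔪
    exact hs (hle (mem_colon_span_singleton.mpr hsm))
  simpa using mem_colon_span_singleton.mp (hcolon ▸ mem_top : (1 : R) ∈ N.colon (span R {m}))

theorem isComult_of_forall_isMaximal
    (h : ∀ 𝔪 : Ideal R, 𝔪.IsMaximal → IsSComult R M ((𝔪 : Set R)ᶜ)) : IsComult R M :=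
  fun N => le_antisymm (le_resid_annihilator N) fun _ hm =>
    N.mem_of_forall_isMaximal_exists_smul_mem fun 𝔪 h𝔪 => (h 𝔪 h𝔪).exists_smul_mem N hm

end

theorem stmt13 (R M : Type*) [CommRing R] [AddCommGroup M] [Module R M] :
    IsComult R M ↔
      ∀ 𝔪 : Ideal R, 𝔪.IsMaximal → IsSComult R M ((𝔪 : Set R)ᶜ) :=
  ⟨fun h _ h𝔪 => h.isSComult h𝔪.isPrime.one_notMem, isComult_of_forall_isMaximal⟩
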